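/- Let 𝓜 : L(C₂^Z × X) → L(C₂^Z × X) be a linear, self-adjoint, C₂≀G-invariant operator (i.e. 𝓜 commutes with the C₂≀G-action). Then: (1) for every θ ∈ C₂^Z there exists a linear self-adjoint operator M_θ : L(X) → L(X) such that 𝓜(χ_θ ⊗ f) = χ_θ ⊗ (M_θ f) for all f ∈ L(X), and these operators satisfy g(M_θ f) = M_{gθ}(gf) for all g ∈ G and f ∈ L(X) (in particular M_θ commutes with the action of the stabilizer G_θ); (2) if V^j_{θ,i} is an eigenspace of M_θ with eigenvalue λ^j_{θ,i}, then W^j_{θ,i} is an eigenspace of 𝓜 with the same eigenvalue λ^j_{θ,i}. -/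

import Mathlib

open Finset

noncomputable section

/-- The action of `G` on lamp configurations `C₂^Z`: `(gθ)(z) = θ(g⁻¹z)`. -/
def confAct {G : Type*} [Group G] {Z : Type*} [MulAction G Z]
    (g : G) (θ : Z → ZMod 2) : Z → ZMod 2 :=
  fun z => θ (g⁻¹ • z)

/-- The character `χ_θ(ω) = (−1)^{Σ_z θ(z)·ω(z)}` of `C₂^Z`. -/
def confChi {Z : Type*} [Fintype Z] (θ ω : Z → ZMod 2) : ℂ :=
  (-1 : ℂ) ^ (∑ z : Z, (θ z * ω z).val)

/-- The action of `g ∈ G` on `L(X)`: `(gf)(x) = f(g⁻¹x)`, as a linear operator. -/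
def transL {G : Type*} [Group G] {X : Type*} [MulAction G X] (g : G) :
    (X → ℂ) →ₗ[ℂ] (X → ℂ) where
  toFun f := fun x => f (g⁻¹ • x)
  map_add' _ _ := rfl
  map_smul' _ _ := rfl

/-- The action of the element `(ω,g)` of the wreath product `C₂ ≀ G` on
`L(C₂^Z × X)`: `((ω,g)F)(σ,x) = F((ω,g)⁻¹(σ,x)) = F(g⁻¹ω + g⁻¹σ, g⁻¹x)`. -/
def wreathAct {G : Type*} [Group G] {Z : Type*} [MulAction G Z] {X : Type*}
    [MulAction G X] (ω : Z → ZMod 2) (g : G) (F : (Z → ZMod 2) × X → ℂ) :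
    (Z → ZMod 2) × X → ℂ :=
  fun p => F (confAct g⁻¹ ω + confAct g⁻¹ p.1, g⁻¹ • p.2)
/-- The linear map `f ↦ χ_θ ⊗ f` from `L(X)` to `L(C₂^Z × X)`. -/
def tChi {Z : Type*} [Fintype Z] {X : Type*} (θ : Z → ZMod 2) :
    (X → ℂ) →ₗ[ℂ] ((Z → ZMod 2) × X → ℂ) where
  toFun f := fun p => confChi θ p.1 * f p.2
  map_add' f₁ f₂ := by funext p; simp [mul_add]
  map_smul' c f := by funext p; simp; ring

/-- The subspace `⊕_{s∈S_θ} {χ_{sθ} ⊗ f : f ∈ sV}` of `L(C₂^Z × X)`. -/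
def inducedImage {G : Type*} [Group G] {Z : Type*} [Fintype Z] [MulAction G Z]
    {X : Type*} [MulAction G X] (S : Set G) (θ : Z → ZMod 2)
    (V : Submodule ℂ (X → ℂ)) : Submodule ℂ ((Z → ZMod 2) × X → ℂ) :=
  ⨆ s ∈ S, (V.map (transL s)).map (tChi (confAct s θ))

lemma neg_one_pow_val_add (a b : ZMod 2) :
    (-1 : ℂ) ^ ((a + b).val) = (-1 : ℂ) ^ a.val * (-1 : ℂ) ^ b.val := by
  match a, b with
  | 0, 0 => norm_num
  | 0, 1 => norm_num
  | 1, 0 => norm_num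
  | 1, 1 => norm_num [show ZMod.val (2 : ZMod 2) = 0 from rfl, show ZMod.val (1 : ZMod 2) = 1 from rfl]

lemma confChi_prod {Z : Type*} [Fintype Z] (θ ω : Z → ZMod 2) :
    confChi θ ω = ∏ z : Z, (-1 : ℂ) ^ ((θ z * ω z).val) := by
  rw [confChi, ← Finset.prod_pow_eq_pow_sum]

lemma confChi_add {Z : Type*} [Fintype Z] (θ σ ω : Z → ZMod 2) :
    confChi θ (σ + ω) = confChi θ σ * confChi θ ω := by
  simp only [confChi_prod, ← Finset.prod_mul_distrib]
  refine Finset.prod_congr rfl fun z _ => ?_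
  have : θ z * (σ + ω) z = θ z * σ z + θ z * ω z := by
    simp [Pi.add_apply, mul_add]
  rw [this, neg_one_pow_val_add]

lemma confChi_zero {Z : Type*} [Fintype Z] (θ : Z → ZMod 2) :
    confChi θ 0 = 1 := by
  simp [confChi]

lemma confChi_conj {Z : Type*} [Fintype Z] (θ ω : Z → ZMod 2) :
    (starRingEnd ℂ) (confChi θ ω) = confChi θ ω := by
  simp [confChi]

lemma confChi_sq {Z : Type*} [Fintype Z] (θ ω : Z → ZMod 2) :
    confChi θ ω * confChi θ ω = 1 := by
  rw [confChi, ← pow_add, ← two_mul, pow_mul]; norm_num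

lemma confChi_equivariant {G : Type*} [Group G] {Z : Type*} [Fintype Z]
    [MulAction G Z] (g : G) (θ σ : Z → ZMod 2) :
    confChi θ (confAct g⁻¹ σ) = confChi (confAct g θ) σ := by
  unfold confChi confAct
  congr 1
  exact Fintype.sum_equiv (MulAction.toPerm g) _ _ (fun z => by simp)

lemma confAct_one {G : Type*} [Group G] {Z : Type*} [MulAction G Z]
    (θ : Z → ZMod 2) : confAct (1 : G) θ = θ := by
  funext z; simp [confAct]

lemma confAct_inv_zero {G : Type*} [Group G] {Z : Type*} [MulAction G Z]
    (g : G) : confAct g (0 : Z → ZMod 2) = 0 := rfl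

/-- Let `𝓜` be a linear, self-adjoint, `C₂≀G`-invariant operator on
`L(C₂^Z × X)`. Then (1) for every `θ ∈ C₂^Z` there is a linear self-adjoint operator
`M_θ` on `L(X)` with `𝓜(χ_θ ⊗ f) = χ_θ ⊗ M_θ f`, and these satisfy
`g(M_θ f) = M_{gθ}(gf)`; (2) for any such family, if `V^j_{θ,i}` is an eigenspace of
`M_θ` with eigenvalue `λ`, then `W^j_{θ,i}` is an eigenspace of `𝓜` with the same
eigenvalue `λ`. -/
theorem wreath_invariant_operator_spectral
    {G : Type*} [Group G] [Fintype G]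
    {Z : Type*} [Fintype Z] [DecidableEq Z] [MulAction G Z]
    {X : Type*} [Fintype X] [MulAction G X] [MulAction.IsPretransitive G X]
    (Θ : Set (Z → ZMod 2))
    (hΘ : ∀ σ : Z → ZMod 2, ∃! θ, θ ∈ Θ ∧ ∃ g : G, confAct g θ = σ)
    (S : (Z → ZMod 2) → Set G)
    (hS1 : ∀ θ, (1 : G) ∈ S θ)
    (hSrep : ∀ θ, ∀ g : G, ∃! s, s ∈ S θ ∧ confAct (s⁻¹ * g) θ = θ)
    (n : (Z → ZMod 2) → ℕ) (m : (Z → ZMod 2) → ℕ → ℕ)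
    (Vsub : (Z → ZMod 2) → ℕ → ℕ → Submodule ℂ (X → ℂ))
    (hinv : ∀ θ ∈ Θ, ∀ i ≤ n θ, ∀ j, 1 ≤ j → j ≤ m θ i →
      ∀ h : G, confAct h θ = θ → ∀ f ∈ Vsub θ i j, transL h f ∈ Vsub θ i j)
    (M : ((Z → ZMod 2) × X → ℂ) →ₗ[ℂ] ((Z → ZMod 2) × X → ℂ))
    (hMinv : ∀ (ω : Z → ZMod 2) (g : G) (F : (Z → ZMod 2) × X → ℂ),
      M (wreathAct ω g F) = wreathAct ω g (M F))
    (hMsa : ∀ F F' : (Z → ZMod 2) × X → ℂ,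
      ∑ p : (Z → ZMod 2) × X, M F p * (starRingEnd ℂ) (F' p)
        = ∑ p : (Z → ZMod 2) × X, F p * (starRingEnd ℂ) (M F' p)) :
    (∃ Mth : (Z → ZMod 2) → ((X → ℂ) →ₗ[ℂ] (X → ℂ)),
        (∀ (θ : Z → ZMod 2) (f : X → ℂ), M (tChi θ f) = tChi θ (Mth θ f))
        ∧ (∀ (θ : Z → ZMod 2) (f f' : X → ℂ),
            ∑ x : X, Mth θ f x * (starRingEnd ℂ) (f' x)
              = ∑ x : X, f x * (starRingEnd ℂ) (Mth θ f' x))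
        ∧ (∀ (g : G) (θ : Z → ZMod 2) (f : X → ℂ),
            transL g (Mth θ f) = Mth (confAct g θ) (transL g f)))
    ∧ (∀ Mth : (Z → ZMod 2) → ((X → ℂ) →ₗ[ℂ] (X → ℂ)),
        (∀ (θ : Z → ZMod 2) (f : X → ℂ), M (tChi θ f) = tChi θ (Mth θ f)) →
        ∀ θ ∈ Θ, ∀ i ≤ n θ, ∀ j, 1 ≤ j → j ≤ m θ i → ∀ lam : ℂ,
          (∀ f ∈ Vsub θ i j, Mth θ f = lam • f) →
          ∀ F ∈ inducedImage (S θ) θ (Vsub θ i j), M F = lam • F) := by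
  classical
  have hws : ∀ (ω : Z → ZMod 2) (g : G) (c : ℂ) (F : (Z → ZMod 2) × X → ℂ),
      wreathAct ω g (c • F) = c • wreathAct ω g F := fun _ _ _ _ => rfl
  have hEquiv : ∀ (g : G) (θ : Z → ZMod 2) (f : X → ℂ),
      wreathAct 0 g (tChi θ f) = tChi (confAct g θ) (transL g f) := by
    intro g θ f
    funext p
    show confChi θ (confAct g⁻¹ 0 + confAct g⁻¹ p.1) * f (g⁻¹ • p.2) = _
    rw [confAct_inv_zero, zero_add, confChi_equivariant]
    rfl
  have hKey : ∀ (θ : Z → ZMod 2) (f : X → ℂ) (σ : Z → ZMod 2) (x : X),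
      M (tChi θ f) (σ, x) = confChi θ σ * M (tChi θ f) (0, x) := by
    intro θ f σ x
    have h1 : wreathAct σ (1 : G) (tChi θ f) = confChi θ σ • tChi θ f := by
      funext p
      show confChi θ (confAct (1:G)⁻¹ σ + confAct (1:G)⁻¹ p.1) * f ((1:G)⁻¹ • p.2) = _
      rw [inv_one, confAct_one, confAct_one, confChi_add, one_smul]
      show confChi θ σ * confChi θ p.1 * f p.2 = confChi θ σ * (confChi θ p.1 * f p.2)
      rw [mul_assoc]
    have h2 := hMinv σ 1 (tChi θ f)
    rw [h1, map_smul] at h2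
    have h3 := congrFun h2 (0, x)
    have h4 : wreathAct σ (1 : G) (M (tChi θ f)) (0, x) = M (tChi θ f) (σ, x) := by
      show M (tChi θ f) (confAct (1:G)⁻¹ σ + confAct (1:G)⁻¹ 0, (1:G)⁻¹ • x) = _
      rw [inv_one, confAct_one, confAct_one, add_zero, one_smul]
    rw [h4] at h3
    exact h3.symm
  set Mth0 : (Z → ZMod 2) → ((X → ℂ) →ₗ[ℂ] (X → ℂ)) := fun θ =>
    { toFun := fun f x => M (tChi θ f) (0, x)
      map_add' := fun f g => by funext x; simp [map_add]
      map_smul' := fun c f => by funext x; simp [map_smul] } with hMth0def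
  have hM1 : ∀ (θ : Z → ZMod 2) (f : X → ℂ), M (tChi θ f) = tChi θ (Mth0 θ f) := by
    intro θ f
    funext p
    exact hKey θ f p.1 p.2
  have htChi_inj : ∀ (τ : Z → ZMod 2) (a b : X → ℂ), tChi τ a = tChi τ b → a = b := by
    intro τ a b h
    funext x
    have h2 : confChi τ 0 * a x = confChi τ 0 * b x := congrFun h (0, x)
    rwa [confChi_zero, one_mul, one_mul] at h2
  have hsum : ∀ (θ : Z → ZMod 2) (a b : X → ℂ),
      ∑ p : (Z → ZMod 2) × X, tChi θ a p * (starRingEnd ℂ) (tChi θ b p)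
        = (Fintype.card (Z → ZMod 2) : ℂ) * ∑ x : X, a x * (starRingEnd ℂ) (b x) := by
    intro θ a b
    have h1 : ∀ σ : Z → ZMod 2, ∀ x : X,
        tChi θ a (σ, x) * (starRingEnd ℂ) (tChi θ b (σ, x))
          = a x * (starRingEnd ℂ) (b x) := by
      intro σ x
      show (confChi θ σ * a x) * (starRingEnd ℂ) (confChi θ σ * b x) = _
      rw [map_mul, confChi_conj]
      calc (confChi θ σ * a x) * (confChi θ σ * (starRingEnd ℂ) (b x))
          = (confChi θ σ * confChi θ σ) * (a x * (starRingEnd ℂ) (b x)) := by ring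
        _ = a x * (starRingEnd ℂ) (b x) := by rw [confChi_sq, one_mul]
    rw [Fintype.sum_prod_type]
    simp only [h1]
    rw [Finset.sum_const, Finset.card_univ, nsmul_eq_mul]
  have hsa : ∀ (θ : Z → ZMod 2) (a b : X → ℂ),
      ∑ x : X, Mth0 θ a x * (starRingEnd ℂ) (b x)
        = ∑ x : X, a x * (starRingEnd ℂ) (Mth0 θ b x) := by
    intro θ a b
    have h := hMsa (tChi θ a) (tChi θ b)
    rw [hM1, hM1, hsum, hsum] at h
    have hcard : (Fintype.card (Z → ZMod 2) : ℂ) ≠ 0 :=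
      Nat.cast_ne_zero.mpr Fintype.card_ne_zero
    exact mul_left_cancel₀ hcard h
  have hM3 : ∀ (g : G) (θ : Z → ZMod 2) (f : X → ℂ),
      transL g (Mth0 θ f) = Mth0 (confAct g θ) (transL g f) := by
    intro g θ f
    apply htChi_inj (confAct g θ)
    have h := hMinv 0 g (tChi θ f)
    rw [hEquiv] at h
    rw [hM1, hM1] at h
    rw [hEquiv] at h
    exact h.symm
  refine ⟨⟨Mth0, hM1, hsa, hM3⟩, ?_⟩
  intro Mth hMth θ _ i _ j _ _ lam hlam F hF
  have key : inducedImage (S θ) θ (Vsub θ i j) ≤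
      LinearMap.ker (M - lam • LinearMap.id) := by
    refine iSup_le fun s => iSup_le fun _ => ?_
    intro F' hF'
    rw [Submodule.mem_map] at hF'
    obtain ⟨f', hf', rfl⟩ := hF'
    rw [Submodule.mem_map] at hf'
    obtain ⟨f, hf, rfl⟩ := hf'
    rw [LinearMap.mem_ker, LinearMap.sub_apply, LinearMap.smul_apply, LinearMap.id_apply,
      sub_eq_zero]
    rw [← hEquiv, hMinv, hMth, hlam f hf, map_smul, hws]
  have h := key hF
  rwa [LinearMap.mem_ker, LinearMap.sub_apply, LinearMap.smul_apply, LinearMap.id_apply,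
    sub_eq_zero] at h
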